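/- Let (Y_i, Y_j) be jointly Gaussian, mean zero, variances σ_i², σ_j² > 0, correlation ρ ∈ (−1,1), ρ' = √(1−ρ²), and let δ̄ > 0, δ* = δ̄/(√2 σ_i). Then E[|Y_j| · 1_{|Y_i| > δ̄}] = √(2/π) · σ_j · (1 − erf(δ*/ρ') + ρ·erf(ρδ*/ρ')·exp(−δ*²)). -/

import Mathlib

open Real MeasureTheory Set Filter


/-- The Gauss error function. -/
noncomputable def erf (x : ℝ) : ℝ := (2 / Real.sqrt π) * ∫ t in (0 : ℝ)..x, Real.exp (-t ^ 2)

lemma sqrt_pi_pos : 0 < Real.sqrt π := Real.sqrt_pos.mpr Real.pi_pos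

lemma gauss_cont : Continuous fun t : ℝ => Real.exp (-t ^ 2) := by
  continuity

lemma gauss_int : Integrable fun t : ℝ => Real.exp (-t ^ 2) := by
  simpa using integrable_exp_neg_mul_sq (b := 1) one_pos

lemma gauss_Ioi : ∫ t in Ioi (0:ℝ), Real.exp (-t ^ 2) = Real.sqrt π / 2 := by
  simpa using integral_gaussian_Ioi 1

lemma erf_hasDerivAt (x : ℝ) : HasDerivAt erf (2 / Real.sqrt π * Real.exp (-x ^ 2)) x := by
  have h : HasDerivAt (fun u => ∫ t in (0:ℝ)..u, Real.exp (-t ^ 2)) (Real.exp (-x ^ 2)) x :=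
    intervalIntegral.integral_hasDerivAt_right gauss_int.intervalIntegrable
      (gauss_cont.stronglyMeasurable.stronglyMeasurableAtFilter) gauss_cont.continuousAt
  exact h.const_mul (2 / Real.sqrt π)

lemma erf_continuous : Continuous erf :=
  continuous_iff_continuousAt.mpr fun x => (erf_hasDerivAt x).continuousAt

lemma erf_neg (x : ℝ) : erf (-x) = - erf x := by
  unfold erf
  have h : (∫ t in (0:ℝ)..(-x), Real.exp (-t ^ 2)) = - ∫ t in (0:ℝ)..x, Real.exp (-t ^ 2) := by
    have h0 := intervalIntegral.integral_comp_neg (a := (0:ℝ)) (b := -x)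
      (fun t => Real.exp (-t ^ 2))
    simp only [neg_sq, neg_zero, neg_neg] at h0
    rw [h0, intervalIntegral.integral_symm]
  rw [h]; ring

lemma erf_tendsto : Tendsto erf atTop (nhds 1) := by
  have h : Tendsto (fun x : ℝ => ∫ t in (0:ℝ)..x, Real.exp (-t ^ 2)) atTop
      (nhds (∫ t in Ioi (0:ℝ), Real.exp (-t ^ 2))) :=
    intervalIntegral_tendsto_integral_Ioi 0 gauss_int.integrableOn tendsto_id
  have := h.const_mul (2 / Real.sqrt π)
  rw [gauss_Ioi] at this
  have heq : 2 / Real.sqrt π * (Real.sqrt π / 2) = 1 := by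
    field_simp
  rw [heq] at this
  exact this

lemma erf_nonneg {x : ℝ} (hx : 0 ≤ x) : 0 ≤ erf x := by
  unfold erf
  have : 0 ≤ ∫ t in (0:ℝ)..x, Real.exp (-t ^ 2) :=
    intervalIntegral.integral_nonneg hx (fun t _ => (Real.exp_pos _).le)
  positivity

lemma erf_le_one (x : ℝ) : erf x ≤ 1 := by
  rcases le_or_gt x 0 with hx | hx
  · calc erf x = -erf (-x) := by rw [← erf_neg, neg_neg]
      _ ≤ 0 := neg_nonpos_of_nonneg (erf_nonneg (by linarith))
      _ ≤ 1 := by norm_num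
  · unfold erf
    rw [div_mul_eq_mul_div, div_le_one (by positivity : (0:ℝ) < Real.sqrt π)]
    have h1 : (∫ t in (0:ℝ)..x, Real.exp (-t ^ 2)) = ∫ t in Ioc (0:ℝ) x, Real.exp (-t ^ 2) := by
      rw [intervalIntegral.integral_of_le hx.le]
    rw [h1]
    have h2 : (∫ t in Ioc (0:ℝ) x, Real.exp (-t ^ 2)) ≤ ∫ t in Ioi (0:ℝ), Real.exp (-t ^ 2) := by
      apply setIntegral_mono_set gauss_int.integrableOn
      · exact Eventually.of_forall fun t => (Real.exp_pos _).le
      · exact HasSubset.Subset.eventuallyLE Ioc_subset_Ioi_self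
    rw [gauss_Ioi] at h2
    linarith [sqrt_pi_pos]
    
lemma abs_erf_le_one (x : ℝ) : |erf x| ≤ 1 := by
  rw [abs_le]
  constructor
  · have := erf_le_one (-x); rw [erf_neg] at this; linarith
  · exact erf_le_one x

lemma interval_to_erf (z : ℝ) :
    ∫ t in (0:ℝ)..z, Real.exp (-t ^ 2) = Real.sqrt π / 2 * erf z := by
  unfold erf
  have := sqrt_pi_pos
  field_simp

lemma exp_tail {b : ℝ} (hb : 0 < b) (δ : ℝ) :
    ∫ y in Ioi δ, Real.exp (-b * y ^ 2)
      = Real.sqrt (π / b) / 2 * (1 - erf (Real.sqrt b * δ)) := by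
  have hint : Integrable fun y : ℝ => Real.exp (-b * y ^ 2) := integrable_exp_neg_mul_sq hb
  have hsb : (0:ℝ) < Real.sqrt b := Real.sqrt_pos.mpr hb
  have htot : ∫ y : ℝ, Real.exp (-b * y ^ 2) = Real.sqrt (π / b) := integral_gaussian b
  have hIic0 : ∫ y in Iic (0:ℝ), Real.exp (-b * y ^ 2) = Real.sqrt (π / b) / 2 := by
    have h1 := integral_comp_neg_Iic (0:ℝ) (fun y => Real.exp (-b * y ^ 2))
    simp only [neg_sq, neg_zero] at h1
    rw [h1, integral_gaussian_Ioi]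
  have hival : ∫ y in (0:ℝ)..δ, Real.exp (-b * y ^ 2)
      = (Real.sqrt b)⁻¹ * (Real.sqrt π / 2 * erf (Real.sqrt b * δ)) := by
    have hcomp : ∀ y : ℝ, Real.exp (-b * y ^ 2) = Real.exp (-(Real.sqrt b * y) ^ 2) := by
      intro y; rw [mul_pow, Real.sq_sqrt hb.le]; ring_nf
    simp_rw [hcomp]
    rw [intervalIntegral.integral_comp_mul_left (fun t => Real.exp (-t ^ 2)) (ne_of_gt hsb)]
    simp only [mul_zero, smul_eq_mul]
    rw [interval_to_erf]
  have hIicδ : ∫ y in Iic δ, Real.exp (-b * y ^ 2)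
      = Real.sqrt (π / b) / 2
        + (Real.sqrt b)⁻¹ * (Real.sqrt π / 2 * erf (Real.sqrt b * δ)) := by
    have := intervalIntegral.integral_Iic_sub_Iic (μ := volume)
      (f := fun y : ℝ => Real.exp (-b * y ^ 2)) (a := (0:ℝ)) (b := δ)
      hint.integrableOn hint.integrableOn
    rw [hIic0, hival] at this
    linarith
  have hsplit := intervalIntegral.integral_Iic_add_Ioi (μ := volume) (b := δ)
    (f := fun y : ℝ => Real.exp (-b * y ^ 2)) hint.integrableOn hint.integrableOn
  rw [hIicδ, htot] at hsplit
  have hdiv : Real.sqrt (π / b) = Real.sqrt π / Real.sqrt b := Real.sqrt_div pi_pos.le b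
  rw [hdiv] at hsplit ⊢
  have hgoal : ∫ y in Ioi δ, Real.exp (-b * y ^ 2)
      = Real.sqrt π / Real.sqrt b
        - (Real.sqrt π / Real.sqrt b / 2
          + (Real.sqrt b)⁻¹ * (Real.sqrt π / 2 * erf (Real.sqrt b * δ))) := by
    linarith
  rw [hgoal]
  have hsb' : Real.sqrt b ≠ 0 := ne_of_gt hsb
  field_simp
  ring

lemma y_exp_tail {b : ℝ} (hb : 0 < b) (δ : ℝ) :
    ∫ y in Ioi δ, y * Real.exp (-b * y ^ 2) = Real.exp (-b * δ ^ 2) / (2 * b) := by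
  have hderiv : ∀ y ∈ Ici δ, HasDerivAt (fun y : ℝ => -Real.exp (-b * y ^ 2) / (2 * b))
      (y * Real.exp (-b * y ^ 2)) y := by
    intro y _
    have h1 : HasDerivAt (fun y : ℝ => -b * y ^ 2) (-b * (2 * y)) y := by
      simpa using ((hasDerivAt_pow 2 y).const_mul (-b))
    have h2 := (h1.exp).neg.div_const (2 * b)
    refine h2.congr_deriv ?_
    field_simp
  have hlim : Tendsto (fun y : ℝ => -Real.exp (-b * y ^ 2) / (2 * b)) atTop (nhds 0) := by
    have h1 : Tendsto (fun y : ℝ => -b * y ^ 2) atTop atBot := by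
      apply Tendsto.const_mul_atTop_of_neg (by linarith : -b < 0)
      exact tendsto_pow_atTop (by norm_num)
    have := (Real.tendsto_exp_atBot.comp h1).neg.div_const (2 * b)
    simpa using this
  have hint : IntegrableOn (fun y : ℝ => y * Real.exp (-b * y ^ 2)) (Ioi δ) :=
    (integrable_mul_exp_neg_mul_sq hb).integrableOn
  have := integral_Ioi_of_hasDerivAt_of_tendsto' hderiv hint hlim
  rw [this]
  field_simp
  ring

lemma integrable_y_exp_erf {b : ℝ} (hb : 0 < b) (k : ℝ) :
    Integrable fun y : ℝ => y * Real.exp (-b * y ^ 2) * erf (k * y) := by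
  have hcont : Continuous fun y : ℝ => y * Real.exp (-b * y ^ 2) * erf (k * y) := by
    apply Continuous.mul
    · exact continuous_id.mul (Real.continuous_exp.comp (by continuity))
    · exact erf_continuous.comp (by continuity)
  apply (integrable_mul_exp_neg_mul_sq hb).mono hcont.aestronglyMeasurable
  refine Eventually.of_forall fun y => ?_
  simp only [norm_mul, Real.norm_eq_abs]
  have h1 : |erf (k * y)| ≤ 1 := abs_erf_le_one _
  have h2 : (0:ℝ) ≤ |y| * |Real.exp (-b * y ^ 2)| := by positivity
  calc |y| * |Real.exp (-b * y ^ 2)| * |erf (k * y)|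
      ≤ |y| * |Real.exp (-b * y ^ 2)| * 1 := by
        exact mul_le_mul_of_nonneg_left h1 h2
    _ = |y| * |Real.exp (-b * y ^ 2)| := by ring

lemma y_exp_erf_tail {b : ℝ} (hb : 0 < b) (k δ : ℝ) :
    ∫ y in Ioi δ, y * Real.exp (-b * y ^ 2) * erf (k * y)
      = Real.exp (-b * δ ^ 2) / (2 * b) * erf (k * δ)
        + k / (2 * b) * (2 / Real.sqrt π) * ∫ y in Ioi δ, Real.exp (-(b + k ^ 2) * y ^ 2) := by
  set F : ℝ → ℝ := fun y => -Real.exp (-b * y ^ 2) / (2 * b) * erf (k * y) with hF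
  set f1 : ℝ → ℝ := fun y => y * Real.exp (-b * y ^ 2) * erf (k * y) with hf1
  set f2 : ℝ → ℝ := fun y => k / (2 * b) * (2 / Real.sqrt π) * Real.exp (-(b + k ^ 2) * y ^ 2)
    with hf2
  have hbk : (0:ℝ) < b + k ^ 2 := by positivity
  have hderiv : ∀ y ∈ Ici δ, HasDerivAt F (f1 y - f2 y) y := by
    intro y _
    have h1 : HasDerivAt (fun y : ℝ => -Real.exp (-b * y ^ 2) / (2 * b))
        (y * Real.exp (-b * y ^ 2)) y := by
      have ha : HasDerivAt (fun y : ℝ => -b * y ^ 2) (-b * (2 * y)) y := by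
        simpa using ((hasDerivAt_pow 2 y).const_mul (-b))
      have h2 := (ha.exp).neg.div_const (2 * b)
      refine h2.congr_deriv ?_
      field_simp
    have h3 : HasDerivAt (fun y : ℝ => erf (k * y))
        (2 / Real.sqrt π * Real.exp (-(k * y) ^ 2) * k) y :=
      (erf_hasDerivAt (k * y)).comp y (by simpa using (hasDerivAt_id y).const_mul k)
    have h4 := h1.mul h3
    refine h4.congr_deriv ?_
    simp only [hf1, hf2, hF]
    rw [show Real.exp (-(b + k ^ 2) * y ^ 2)
        = Real.exp (-b * y ^ 2) * Real.exp (-(k * y) ^ 2) by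
      rw [← Real.exp_add]; ring_nf]
    field_simp
    ring
  have hlim : Tendsto F atTop (nhds 0) := by
    refine squeeze_zero_norm (a := fun y : ℝ => Real.exp (-b * y ^ 2) / (2 * b)) ?_ ?_
    · intro y
      simp only [hF, norm_mul, Real.norm_eq_abs, abs_div, abs_neg, Real.abs_exp]
      calc Real.exp (-b * y ^ 2) / |2 * b| * |erf (k * y)|
          ≤ Real.exp (-b * y ^ 2) / |2 * b| * 1 :=
            mul_le_mul_of_nonneg_left (abs_erf_le_one _) (by positivity)
        _ = Real.exp (-b * y ^ 2) / (2 * b) := by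
            rw [abs_of_pos (by linarith : (0:ℝ) < 2 * b)]; ring
    · have h1 : Tendsto (fun y : ℝ => -b * y ^ 2) atTop atBot := by
        apply Tendsto.const_mul_atTop_of_neg (by linarith : -b < 0)
        exact tendsto_pow_atTop (by norm_num)
      have := (Real.tendsto_exp_atBot.comp h1).div_const (2 * b)
      simpa using this
  have hint1 : IntegrableOn f1 (Ioi δ) := (integrable_y_exp_erf hb k).integrableOn
  have hint2 : IntegrableOn f2 (Ioi δ) :=
    ((integrable_exp_neg_mul_sq hbk).const_mul _).integrableOn
  have := integral_Ioi_of_hasDerivAt_of_tendsto' hderiv (hint1.sub hint2) hlim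
  rw [integral_sub hint1 hint2] at this
  have hF0 : F δ = -Real.exp (-b * δ ^ 2) / (2 * b) * erf (k * δ) := rfl
  have hi2 : ∫ y in Ioi δ, f2 y
      = k / (2 * b) * (2 / Real.sqrt π) * ∫ y in Ioi δ, Real.exp (-(b + k ^ 2) * y ^ 2) :=
    integral_const_mul _ _
  rw [hi2] at this
  have : ∫ y in Ioi δ, f1 y = 0 - F δ
      + k / (2 * b) * (2 / Real.sqrt π) * ∫ y in Ioi δ, Real.exp (-(b + k ^ 2) * y ^ 2) := by
    linarith
  rw [this, hF0]
  ring

lemma integrable_y_exp_shift {s : ℝ} (hs : 0 < s) (ν : ℝ) :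
    Integrable fun y : ℝ => y * Real.exp (-(y - ν) ^ 2 / (2 * s ^ 2)) := by
  have hb : (0:ℝ) < 1 / (2 * s ^ 2) := by positivity
  have hbase : Integrable fun u : ℝ => (u + ν) * Real.exp (-(1 / (2 * s ^ 2)) * u ^ 2) := by
    have h1 := integrable_mul_exp_neg_mul_sq hb
    have h2 := (integrable_exp_neg_mul_sq hb).const_mul ν
    have := h1.add h2
    apply this.congr
    refine Eventually.of_forall fun u => ?_
    simp only [Pi.add_apply]
    ring
  have := hbase.comp_sub_right ν
  apply this.congr
  refine Eventually.of_forall fun y => ?_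
  simp only [sub_add_cancel]
  congr 1
  field_simp

lemma tendsto_exp_neg_shift_sq {s : ℝ} (hs : 0 < s) (ν : ℝ) :
    Tendsto (fun y : ℝ => Real.exp (-(y - ν) ^ 2 / (2 * s ^ 2))) atTop (nhds 0) := by
  have h1 : Tendsto (fun y : ℝ => (y - ν) ^ 2) atTop atTop := by
    apply (tendsto_pow_atTop (two_ne_zero)).comp
    exact tendsto_atTop_add_const_right _ (-ν) tendsto_id
  have h2 : Tendsto (fun y : ℝ => -(y - ν) ^ 2 / (2 * s ^ 2)) atTop atBot := by
    apply Tendsto.atBot_div_const (by positivity : (0:ℝ) < 2 * s ^ 2)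
    exact tendsto_neg_atTop_atBot.comp h1
  exact Real.tendsto_exp_atBot.comp h2

lemma halfline {s : ℝ} (hs : 0 < s) (ν : ℝ) :
    ∫ y in Ioi (0:ℝ), y * Real.exp (-(y - ν) ^ 2 / (2 * s ^ 2))
      = s ^ 2 * Real.exp (-ν ^ 2 / (2 * s ^ 2))
        + ν * Real.sqrt (π / 2) * s * (1 + erf (ν / (Real.sqrt 2 * s))) := by
  have hs2 : (0:ℝ) < Real.sqrt 2 := by positivity
  have hspi : Real.sqrt (π / 2) = Real.sqrt π / Real.sqrt 2 := Real.sqrt_div pi_pos.le 2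
  set F : ℝ → ℝ := fun y => -s ^ 2 * Real.exp (-(y - ν) ^ 2 / (2 * s ^ 2))
    + ν * Real.sqrt (π / 2) * s * erf ((y - ν) / (Real.sqrt 2 * s)) with hF
  have hderiv : ∀ y ∈ Ici (0:ℝ),
      HasDerivAt F (y * Real.exp (-(y - ν) ^ 2 / (2 * s ^ 2))) y := by
    intro y _
    have hu : HasDerivAt (fun y : ℝ => -(y - ν) ^ 2 / (2 * s ^ 2))
        (-(y - ν) / s ^ 2) y := by
      have h0 : HasDerivAt (fun y : ℝ => (y - ν) ^ 2) (2 * (y - ν)) y := by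
        simpa using (((hasDerivAt_id y).sub_const ν).fun_pow 2)
      have := (h0.neg).div_const (2 * s ^ 2)
      refine this.congr_deriv ?_
      field_simp
    have h1 := (hu.exp).const_mul (-s ^ 2)
    have harg : HasDerivAt (fun y : ℝ => (y - ν) / (Real.sqrt 2 * s))
        (1 / (Real.sqrt 2 * s)) y := by
      simpa using (((hasDerivAt_id y).sub_const ν).div_const (Real.sqrt 2 * s))
    have h2 := ((erf_hasDerivAt ((y - ν) / (Real.sqrt 2 * s))).comp y harg).const_mul
      (ν * Real.sqrt (π / 2) * s)
    have h3 := h1.add h2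
    refine h3.congr_deriv ?_
    have hargsq : (-((y - ν) / (Real.sqrt 2 * s)) ^ 2) = -(y - ν) ^ 2 / (2 * s ^ 2) := by
      rw [div_pow, mul_pow, Real.sq_sqrt (by norm_num : (0:ℝ) ≤ 2)]
      ring
    rw [hargsq, hspi]
    have h2pi : Real.sqrt π ≠ 0 := ne_of_gt sqrt_pi_pos
    have h22 : Real.sqrt 2 * Real.sqrt 2 = 2 := Real.mul_self_sqrt (by norm_num)
    field_simp
    linear_combination (-ν) * h22
  have hlim : Tendsto F atTop
      (nhds (ν * Real.sqrt (π / 2) * s)) := by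
    have h1 := (tendsto_exp_neg_shift_sq hs ν).const_mul (-s ^ 2)
    have harg : Tendsto (fun y : ℝ => (y - ν) / (Real.sqrt 2 * s)) atTop atTop := by
      apply Tendsto.atTop_div_const (by positivity : (0:ℝ) < Real.sqrt 2 * s)
      exact tendsto_atTop_add_const_right _ (-ν) tendsto_id
    have h2 := (erf_tendsto.comp harg).const_mul (ν * Real.sqrt (π / 2) * s)
    rw [show ν * Real.sqrt (π / 2) * s = -s ^ 2 * 0 + ν * Real.sqrt (π / 2) * s * 1 by ring]
    exact h1.add h2
  have hint : IntegrableOn (fun y : ℝ => y * Real.exp (-(y - ν) ^ 2 / (2 * s ^ 2)))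
      (Ioi (0:ℝ)) := (integrable_y_exp_shift hs ν).integrableOn
  have := integral_Ioi_of_hasDerivAt_of_tendsto' hderiv hint hlim
  rw [this, hF]
  simp only
  rw [show ((0:ℝ) - ν) = -ν by ring, neg_sq,
    show (-ν / (Real.sqrt 2 * s)) = -(ν / (Real.sqrt 2 * s)) by ring, erf_neg]
  ring

lemma folded_raw {s : ℝ} (hs : 0 < s) (μ : ℝ) :
    ∫ y : ℝ, |y| * Real.exp (-(y - μ) ^ 2 / (2 * s ^ 2))
      = 2 * s ^ 2 * Real.exp (-μ ^ 2 / (2 * s ^ 2))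
        + 2 * Real.sqrt (π / 2) * s * μ * erf (μ / (Real.sqrt 2 * s)) := by
  have hint : Integrable fun y : ℝ => |y| * Real.exp (-(y - μ) ^ 2 / (2 * s ^ 2)) := by
    have := (integrable_y_exp_shift hs μ).abs
    apply this.congr
    refine Eventually.of_forall fun y => ?_
    simp only [abs_mul, Real.abs_exp]
  have hsplit := intervalIntegral.integral_Iic_add_Ioi (μ := volume) (b := (0:ℝ))
    (f := fun y : ℝ => |y| * Real.exp (-(y - μ) ^ 2 / (2 * s ^ 2)))
    hint.integrableOn hint.integrableOn
  have hIic : ∫ y in Iic (0:ℝ), |y| * Real.exp (-(y - μ) ^ 2 / (2 * s ^ 2))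
      = ∫ y in Ioi (0:ℝ), y * Real.exp (-(y - -μ) ^ 2 / (2 * s ^ 2)) := by
    have h1 := integral_comp_neg_Ioi (0:ℝ)
      (fun y : ℝ => |y| * Real.exp (-(y - μ) ^ 2 / (2 * s ^ 2)))
    rw [neg_zero] at h1
    rw [← h1]
    apply setIntegral_congr_fun measurableSet_Ioi
    intro y hy
    simp only [abs_neg, abs_of_pos (show (0:ℝ) < y from hy)]
    congr 2
    ring
  have hIoi : ∫ y in Ioi (0:ℝ), |y| * Real.exp (-(y - μ) ^ 2 / (2 * s ^ 2))
      = ∫ y in Ioi (0:ℝ), y * Real.exp (-(y - μ) ^ 2 / (2 * s ^ 2)) := by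
    apply setIntegral_congr_fun measurableSet_Ioi
    intro y hy
    simp only [abs_of_pos (show (0:ℝ) < y from hy)]
  rw [hIic, hIoi, halfline hs μ, halfline hs (-μ)] at hsplit
  rw [← hsplit]
  rw [neg_sq, show (-μ / (Real.sqrt 2 * s)) = -(μ / (Real.sqrt 2 * s)) by ring, erf_neg]
  ring

/-- Closed form of `E[|Y_j| · 1_{|Y_i| > δ̄}]` for a mean-zero bivariate normal pair
`(Y_i, Y_j)`, expressed as an integral against the joint density `p yj yi`. -/
theorem bivariate_truncated_abs_moment (σi σj ρ δbar : ℝ)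
    (hσi : 0 < σi) (hσj : 0 < σj) (hρ : ρ ∈ Set.Ioo (-1 : ℝ) 1) (hδ : 0 < δbar)
    (ρ' : ℝ) (hρ' : ρ' = Real.sqrt (1 - ρ ^ 2))
    (δstar : ℝ) (hδstar : δstar = δbar / (Real.sqrt 2 * σi))
    (p : ℝ → ℝ → ℝ)
    (hp : ∀ yj yi, p yj yi = (1 / (2 * π * ρ' * σi * σj)) *
      Real.exp (-(yj ^ 2) / (2 * σj ^ 2) -
        (yi - ρ * (σi / σj) * yj) ^ 2 / (2 * ρ' ^ 2 * σi ^ 2))) :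
    ∫ yi : ℝ, ∫ yj : ℝ, (if δbar < |yi| then |yj| * p yj yi else 0) =
      Real.sqrt (2 / π) * σj *
        (1 - erf (δstar / ρ') + ρ * erf (ρ * δstar / ρ') * Real.exp (-δstar ^ 2)) := by
  obtain ⟨hρ1, hρ2⟩ := hρ
  have hρsq : ρ ^ 2 < 1 := by nlinarith
  have h1ρ : (0:ℝ) < 1 - ρ ^ 2 := by linarith
  have hρ'pos : 0 < ρ' := hρ' ▸ Real.sqrt_pos.mpr h1ρ
  have hρ'2 : ρ' ^ 2 = 1 - ρ ^ 2 := hρ' ▸ Real.sq_sqrt h1ρ.le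
  have h22 : Real.sqrt 2 * Real.sqrt 2 = 2 := Real.mul_self_sqrt (by norm_num)
  have hs2pos : (0:ℝ) < Real.sqrt 2 := by positivity
  have hππ : Real.sqrt π * Real.sqrt π = π := Real.mul_self_sqrt pi_pos.le
  have hπ0 : Real.sqrt π ≠ 0 := ne_of_gt sqrt_pi_pos
  set s : ℝ := ρ' * σj with hsdef
  have hs : 0 < s := by positivity
  set K : ℝ := 1 / (2 * π * ρ' * σi * σj) with hK
  set b : ℝ := 1 / (2 * σi ^ 2) with hb
  have hbpos : 0 < b := by positivity
  set k : ℝ := ρ / (Real.sqrt 2 * ρ' * σi) with hk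
  set b1 : ℝ := 1 / (2 * σi ^ 2 * ρ' ^ 2) with hb1
  have hb1pos : 0 < b1 := by positivity
  set C1 : ℝ := ρ' * σj / (Real.sqrt π * Real.sqrt π * σi) with hC1
  set C2 : ℝ := ρ * σj / (Real.sqrt 2 * Real.sqrt π * σi ^ 2) with hC2
  set μf : ℝ → ℝ := fun yi => ρ * σj / σi * yi with hμf
  -- factorization of the density
  have hfact : ∀ yi yj : ℝ, p yj yi
      = K * Real.exp (-yi ^ 2 / (2 * σi ^ 2)) *
          Real.exp (-(yj - μf yi) ^ 2 / (2 * s ^ 2)) := by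
    intro yi yj
    rw [hp]
    conv_rhs => rw [mul_assoc, ← Real.exp_add]
    simp only [hμf, hsdef]
    congr 1
    rw [mul_pow ρ' σj, hρ'2]
    field_simp
    ring
  -- inner integral
  set g : ℝ → ℝ := fun yi =>
    C1 * Real.exp (-b1 * yi ^ 2) + C2 * (yi * Real.exp (-b * yi ^ 2) * erf (k * yi)) with hg
  have hinner : ∀ yi : ℝ, (∫ yj : ℝ, |yj| * p yj yi) = g yi := by
    intro yi
    have h1 : ∀ yj : ℝ, |yj| * p yj yi
        = (K * Real.exp (-yi ^ 2 / (2 * σi ^ 2))) *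
            (|yj| * Real.exp (-(yj - μf yi) ^ 2 / (2 * s ^ 2))) := by
      intro yj; rw [hfact yi yj]; ring
    simp_rw [h1]
    rw [integral_const_mul, folded_raw hs (μf yi)]
    -- rewrite erf argument
    have harg : μf yi / (Real.sqrt 2 * s) = k * yi := by
      rw [hμf, hk, hsdef]
      field_simp
    rw [harg]
    -- combine the two exponentials in the first term
    have hexp1 : Real.exp (-yi ^ 2 / (2 * σi ^ 2)) * Real.exp (-(μf yi) ^ 2 / (2 * s ^ 2))
        = Real.exp (-b1 * yi ^ 2) := by
      rw [← Real.exp_add]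
      congr 1
      rw [hμf, hsdef, hb1, mul_pow ρ' σj, hρ'2]
      field_simp
      ring
    have hexp2 : Real.exp (-yi ^ 2 / (2 * σi ^ 2)) = Real.exp (-b * yi ^ 2) := by
      congr 1; rw [hb]; field_simp
    have hcoef1 : K * 2 * s ^ 2 = C1 := by
      rw [hK, hsdef, hC1, ← hππ]
      field_simp
      ring
      simp only [Real.sqrt_mul_self (Real.sqrt_nonneg π), Real.sqrt_sq (Real.sqrt_nonneg π)]
    have hcoef2 : K * 2 * Real.sqrt (π / 2) * s * (ρ * σj / σi * yi) = C2 * yi := by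
      rw [hK, hsdef, hC2, Real.sqrt_div pi_pos.le 2,
        show Real.sqrt 2 = Real.sqrt 2 from rfl, ← hππ]
      have h2ne : Real.sqrt 2 ≠ 0 := ne_of_gt hs2pos
      field_simp
      simp only [Real.sqrt_mul_self (Real.sqrt_nonneg π), Real.sqrt_sq (Real.sqrt_nonneg π)]
    have expand : K * Real.exp (-yi ^ 2 / (2 * σi ^ 2)) *
        (2 * s ^ 2 * Real.exp (-(μf yi) ^ 2 / (2 * s ^ 2))
          + 2 * Real.sqrt (π / 2) * s * μf yi * erf (k * yi))
        = (K * 2 * s ^ 2) *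
            (Real.exp (-yi ^ 2 / (2 * σi ^ 2)) * Real.exp (-(μf yi) ^ 2 / (2 * s ^ 2)))
          + (K * 2 * Real.sqrt (π / 2) * s * (ρ * σj / σi * yi)) *
            (Real.exp (-yi ^ 2 / (2 * σi ^ 2)) * erf (k * yi)) := by
      simp only [hμf]
      ring
    rw [expand, hexp1, hexp2, hcoef1, hcoef2, hg]
    ring
  -- rewrite the inner integral with the if
  have hite : ∀ yi : ℝ, (∫ yj : ℝ, if δbar < |yi| then |yj| * p yj yi else 0)
      = Set.indicator (Iio (-δbar) ∪ Ioi δbar) g yi := by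
    intro yi
    by_cases h : δbar < |yi|
    · simp only [h, if_true]
      rw [hinner yi, Set.indicator_of_mem]
      rcases lt_abs.mp h with h' | h'
      · exact Or.inr h'
      · exact Or.inl (show yi ∈ Iio (-δbar) from by simp only [mem_Iio]; linarith)
    · simp only [h, if_false, integral_zero]
      rw [Set.indicator_of_notMem]
      intro hmem
      apply h
      rcases hmem with hm | hm
      · simp only [mem_Iio] at hm
        exact lt_abs.mpr (Or.inr (by linarith))
      · exact lt_abs.mpr (Or.inl hm)
  rw [integral_congr_ae (Eventually.of_forall hite)]
  rw [integral_indicator (measurableSet_Iio.union measurableSet_Ioi)]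
  have hgint : Integrable g := by
    have h1 := (integrable_exp_neg_mul_sq hb1pos).const_mul C1
    have h2 := (integrable_y_exp_erf hbpos k).const_mul C2
    exact h1.add h2
  have hdisj : Disjoint (Iio (-δbar)) (Ioi δbar) := by
    rw [Set.disjoint_left]
    intro a ha hb'
    simp only [mem_Iio] at ha
    simp only [mem_Ioi] at hb'
    linarith
  rw [setIntegral_union hdisj measurableSet_Ioi hgint.integrableOn hgint.integrableOn]
  have hrefl : ∫ yi in Iio (-δbar), g yi = ∫ yi in Ioi δbar, g yi := by
    rw [← integral_Iic_eq_integral_Iio]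
    have h1 := integral_comp_neg_Ioi δbar g
    rw [← h1]
    apply (setIntegral_congr_fun measurableSet_Ioi _).symm
    intro y _
    simp only [hg, mul_neg, erf_neg, neg_sq, neg_neg]
    ring
  rw [hrefl]
  have hIoig : ∫ yi in Ioi δbar, g yi
      = C1 * (∫ y in Ioi δbar, Real.exp (-b1 * y ^ 2))
        + C2 * (∫ y in Ioi δbar, y * Real.exp (-b * y ^ 2) * erf (k * y)) := by
    rw [hg]
    rw [integral_add ((integrable_exp_neg_mul_sq hb1pos).const_mul C1).integrableOn
      ((integrable_y_exp_erf hbpos k).const_mul C2).integrableOn,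
      integral_const_mul, integral_const_mul]
  rw [hIoig]
  -- arguments rewrites
  have h2ne : Real.sqrt 2 ≠ 0 := ne_of_gt hs2pos
  have hbk : b + k ^ 2 = b1 := by
    rw [hb, hk, hb1, div_pow, mul_pow, mul_pow, Real.sq_sqrt (by norm_num : (0:ℝ) ≤ 2), hρ'2]
    have : (1:ℝ) - ρ ^ 2 ≠ 0 := ne_of_gt h1ρ
    field_simp
    ring
  have hsqb1' : Real.sqrt b1 = 1 / (Real.sqrt 2 * σi * ρ') := by
    rw [show b1 = (1 / (Real.sqrt 2 * σi * ρ')) ^ 2 by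
      rw [hb1, div_pow, mul_pow, mul_pow, Real.sq_sqrt (by norm_num : (0:ℝ) ≤ 2)]
      ring_nf]
    exact Real.sqrt_sq (by positivity)
  have hargs1 : Real.sqrt b1 * δbar = δstar / ρ' := by
    rw [hsqb1', hδstar]
    field_simp
  have hargs2 : k * δbar = ρ * δstar / ρ' := by
    rw [hk, hδstar]
    field_simp
  have hargs3 : -b * δbar ^ 2 = -δstar ^ 2 := by
    rw [hb, hδstar, div_pow, mul_pow, Real.sq_sqrt (by norm_num : (0:ℝ) ≤ 2)]
    field_simp
  have hsqb1 : Real.sqrt (π / b1) = Real.sqrt π * (Real.sqrt 2 * σi * ρ') := by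
    rw [Real.sqrt_div pi_pos.le, hsqb1']
    field_simp
  rw [exp_tail hb1pos δbar, y_exp_erf_tail hbpos k δbar, hbk, exp_tail hb1pos δbar,
    hsqb1, hargs1, hargs2, hargs3]
  rw [show Real.sqrt (2 / π) = Real.sqrt 2 / Real.sqrt π from Real.sqrt_div (by norm_num) π]
  have key1 : C1 * (Real.sqrt π * (Real.sqrt 2 * σi * ρ') / 2)
      = Real.sqrt 2 / Real.sqrt π * σj * ρ' ^ 2 / 2 := by
    rw [hC1]
    field_simp
  have key2 : C2 * (1 / (2 * b)) = Real.sqrt 2 / Real.sqrt π * σj * ρ / 2 := by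
    rw [hC2, hb]
    field_simp
    linear_combination (-ρ) * h22
  have key3 : C2 * (k / (2 * b) * (2 / Real.sqrt π) * (Real.sqrt π * (Real.sqrt 2 * σi * ρ') / 2))
      = Real.sqrt 2 / Real.sqrt π * σj * ρ ^ 2 / 2 := by
    rw [hC2, hk, hb]
    field_simp
    linear_combination (-ρ ^ 2) * h22
  linear_combination (2 * (1 - erf (δstar / ρ'))) * key1
    + (2 * Real.exp (-δstar ^ 2) * erf (ρ * δstar / ρ')) * key2
    + (2 * (1 - erf (δstar / ρ'))) * key3
    + (Real.sqrt 2 / Real.sqrt π * σj * (1 - erf (δstar / ρ'))) * hρ'2
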